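/- Let H be a nonzero complex Hilbert space, let B, C be bounded linear operators on H, and let r ≥ 2 be a real number. Then w_e(B, C)^{2r} ≤ (1/2)·w(B + C)^{2r} + (1/2)·w(B − C)^{2r} − 2^r·inf{ |Re(⟨Bx, x⟩·conj(⟨Cx, x⟩))|^r : x ∈ H, ‖x‖ = 1 }. -/

import Mathlib

/-!
For a unit vector `x` put `b = ⟪Bx, x⟫`, `c = ⟪Cx, x⟫`, `P = |b + c|²`, `Q = |b - c|²`. Then
`(P + Q)/2 = |b|² + |c|²` and `(P - Q)/4 = Re(b c̄)`, while `|b ± c| ≤ w(B ± C)`. Taking the supremum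
over `x`, the theorem reduces to the scalar inequality
`((P + Q)/2)^r + (|P - Q|/2)^r ≤ (P^r + Q^r)/2` for `r ≥ 2`, which follows from superadditivity and
convexity of `t ↦ t^(r/2)` on `[0, ∞)`, since `((P + Q)/2)² + ((P - Q)/2)² = (P² + Q²)/2`.
-/

open scoped InnerProductSpace
open ContinuousLinearMap

variable {H : Type*} [NormedAddCommGroup H] [InnerProductSpace ℂ H]
  [CompleteSpace H] [Nontrivial H]

/-- The numerical radius of a bounded linear operator. -/
noncomputable def numRad (A : H →L[ℂ] H) : ℝ :=
  ⨆ x : {x : H // ‖x‖ = 1}, ‖⟪A x.1, x.1⟫_ℂ‖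

/-- The Crawford number of a bounded linear operator. -/
noncomputable def crawford (A : H →L[ℂ] H) : ℝ :=
  ⨅ x : {x : H // ‖x‖ = 1}, ‖⟪A x.1, x.1⟫_ℂ‖

/-- The Euclidean operator radius of a pair of bounded linear operators. -/
noncomputable def euclRad (B C : H →L[ℂ] H) : ℝ :=
  ⨆ x : {x : H // ‖x‖ = 1}, Real.sqrt (‖⟪B x.1, x.1⟫_ℂ‖ ^ 2 + ‖⟪C x.1, x.1⟫_ℂ‖ ^ 2)

/-- The absolute value `|A| = (A*A)^(1/2)` of a bounded linear operator. -/
noncomputable def opAbs (A : H →L[ℂ] H) : H →L[ℂ] H := CFC.sqrt (adjoint A * A)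

/-- The real part `Re(A) = (A + A*)/2` of a bounded linear operator. -/
noncomputable def reOp (A : H →L[ℂ] H) : H →L[ℂ] H := (2 : ℂ)⁻¹ • (A + adjoint A)

/-- The imaginary part `Im(A) = (A - A*)/(2i)` of a bounded linear operator. -/
noncomputable def imOp (A : H →L[ℂ] H) : H →L[ℂ] H := (2 * Complex.I)⁻¹ • (A - adjoint A)

open ComplexConjugate

lemma rpow_add_div_two_add_rpow_abs_sub_div_two_le {p q r : ℝ} (hp : 0 ≤ p) (hq : 0 ≤ q)
    (hr : 2 ≤ r) : ((p + q) / 2) ^ r + (|p - q| / 2) ^ r ≤ (p ^ r + q ^ r) / 2 := by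
  have hr2 : 1 ≤ r / 2 := by linarith
  have sq_rpow : ∀ {t : ℝ}, 0 ≤ t → (t ^ 2) ^ (r / 2) = t ^ r := fun ht => by
    rw [← Real.rpow_natCast_mul ht, Nat.cast_ofNat, mul_div_cancel₀ r two_ne_zero]
  calc ((p + q) / 2) ^ r + (|p - q| / 2) ^ r
      = (((p + q) / 2) ^ 2) ^ (r / 2) + ((|p - q| / 2) ^ 2) ^ (r / 2) := by
        rw [sq_rpow (by positivity), sq_rpow (by positivity)]
    _ ≤ (((p + q) / 2) ^ 2 + (|p - q| / 2) ^ 2) ^ (r / 2) :=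
        Real.add_rpow_le_rpow_add (by positivity) (by positivity) hr2
    _ = ((1 / 2 : ℝ) • p ^ 2 + (1 / 2 : ℝ) • q ^ 2) ^ (r / 2) := by
        rw [div_pow |p - q|, sq_abs, smul_eq_mul, smul_eq_mul]
        ring
    _ ≤ (1 / 2 : ℝ) • (p ^ 2) ^ (r / 2) + (1 / 2 : ℝ) • (q ^ 2) ^ (r / 2) :=
        (convexOn_rpow hr2).2 (sq_nonneg p) (sq_nonneg q) (by norm_num) (by norm_num)
          (by norm_num)
    _ = (p ^ r + q ^ r) / 2 := by
        rw [sq_rpow hp, sq_rpow hq, smul_eq_mul, smul_eq_mul]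
        ring

lemma Complex.sq_norm_add_sq_norm_rpow_add_two_rpow_mul_abs_re_mul_conj_le (b c : ℂ) {r : ℝ}
    (hr : 2 ≤ r) :
    (‖b‖ ^ 2 + ‖c‖ ^ 2) ^ r + 2 ^ r * |(b * conj c).re| ^ r ≤
      (‖b + c‖ ^ (2 * r) + ‖b - c‖ ^ (2 * r)) / 2 := by
  have sq_rpow : ∀ z : ℂ, ‖z‖ ^ (2 * r) = (‖z‖ ^ 2) ^ r := fun z => by
    exact_mod_cast Real.rpow_natCast_mul (norm_nonneg z) 2 r
  have hsum : (‖b + c‖ ^ 2 + ‖b - c‖ ^ 2) / 2 = ‖b‖ ^ 2 + ‖c‖ ^ 2 := by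
    simp only [Complex.sq_norm, Complex.normSq_add, Complex.normSq_sub]
    ring
  have hdiff : ‖b + c‖ ^ 2 - ‖b - c‖ ^ 2 = 4 * (b * conj c).re := by
    simp only [Complex.sq_norm, Complex.normSq_add, Complex.normSq_sub]
    ring
  have h := rpow_add_div_two_add_rpow_abs_sub_div_two_le (sq_nonneg ‖b + c‖)
    (sq_nonneg ‖b - c‖) hr
  rw [hsum, hdiff, abs_mul, abs_of_nonneg (by norm_num : (0 : ℝ) ≤ 4), mul_div_right_comm,
    show (4 : ℝ) / 2 = 2 by norm_num, Real.mul_rpow zero_le_two (abs_nonneg _)] at h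
  rwa [sq_rpow, sq_rpow]

lemma ciSup_rpow_le {ι : Sort*} [Nonempty ι] {f : ι → ℝ} (hf : ∀ i, 0 ≤ f i) {p M : ℝ}
    (hp : 0 < p) (h : ∀ i, f i ^ p ≤ M) : (⨆ i, f i) ^ p ≤ M := by
  have hM : 0 ≤ M := (Real.rpow_nonneg (hf (Classical.arbitrary ι)) p).trans (h _)
  refine (Real.le_rpow_inv_iff_of_pos (Real.iSup_nonneg hf) hM hp).1 (ciSup_le fun i => ?_)
  exact (Real.le_rpow_inv_iff_of_pos (hf i) hM hp).2 (h i)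

section

variable {E : Type*} [NormedAddCommGroup E] [InnerProductSpace ℂ E]

lemma norm_inner_self_le_numRad (A : E →L[ℂ] E) {x : E} (hx : ‖x‖ = 1) :
    ‖⟪A x, x⟫_ℂ‖ ≤ numRad A := by
  refine le_ciSup (f := fun y : {x : E // ‖x‖ = 1} => ‖⟪A y.1, y.1⟫_ℂ‖) ⟨‖A‖, ?_⟩ ⟨x, hx⟩
  rintro _ ⟨y, rfl⟩
  calc ‖⟪A y.1, y.1⟫_ℂ‖ ≤ ‖A y.1‖ * ‖y.1‖ := norm_inner_le_norm _ _
    _ ≤ ‖A‖ * ‖y.1‖ * ‖y.1‖ := by gcongr; exact A.le_opNorm _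
    _ = ‖A‖ := by rw [y.2, mul_one, mul_one]

lemma norm_inner_self_rpow_le_numRad_rpow (A : E →L[ℂ] E) {x : E} (hx : ‖x‖ = 1) {p : ℝ}
    (hp : 0 ≤ p) : ‖⟪A x, x⟫_ℂ‖ ^ p ≤ numRad A ^ p :=
  Real.rpow_le_rpow (norm_nonneg _) (norm_inner_self_le_numRad A hx) hp

lemma sq_norm_inner_add_sq_norm_inner_rpow_add_le (B C : E →L[ℂ] E) {x : E} (hx : ‖x‖ = 1)
    {r : ℝ} (hr : 2 ≤ r) :
    (‖⟪B x, x⟫_ℂ‖ ^ 2 + ‖⟪C x, x⟫_ℂ‖ ^ 2) ^ r + 2 ^ r * |(⟪B x, x⟫_ℂ * conj ⟪C x, x⟫_ℂ).re| ^ r ≤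
      (numRad (B + C) ^ (2 * r) + numRad (B - C) ^ (2 * r)) / 2 := by
  have h := Complex.sq_norm_add_sq_norm_rpow_add_two_rpow_mul_abs_re_mul_conj_le
    ⟪B x, x⟫_ℂ ⟪C x, x⟫_ℂ hr
  have hadd := norm_inner_self_rpow_le_numRad_rpow (B + C) hx (p := 2 * r) (by positivity)
  have hsub := norm_inner_self_rpow_le_numRad_rpow (B - C) hx (p := 2 * r) (by positivity)
  rw [add_apply, inner_add_left] at hadd
  rw [sub_apply, inner_sub_left] at hsub
  linarith

end

theorem stmt17 (B C : H →L[ℂ] H) (r : ℝ) (hr : 2 ≤ r) :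
    (euclRad B C) ^ (2 * r) ≤
      (1/2) * (numRad (B + C)) ^ (2 * r) + (1/2) * (numRad (B - C)) ^ (2 * r)
        - (2 : ℝ) ^ r *
          ⨅ x : {x : H // ‖x‖ = 1},
            |(⟪B x.1, x.1⟫_ℂ * (starRingEnd ℂ) ⟪C x.1, x.1⟫_ℂ).re| ^ r := by
  obtain ⟨v, hv⟩ := exists_norm_eq H zero_le_one
  have : Nonempty {x : H // ‖x‖ = 1} := ⟨⟨v, hv⟩⟩
  refine ciSup_rpow_le (fun x => Real.sqrt_nonneg _) (by positivity) fun x => ?_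
  have hinf : (⨅ y : {x : H // ‖x‖ = 1}, |(⟪B y.1, y.1⟫_ℂ * conj ⟪C y.1, y.1⟫_ℂ).re| ^ r) ≤
      |(⟪B x.1, x.1⟫_ℂ * conj ⟪C x.1, x.1⟫_ℂ).re| ^ r :=
    ciInf_le ⟨0, by rintro _ ⟨y, rfl⟩; positivity⟩ x
  have hx := sq_norm_inner_add_sq_norm_inner_rpow_add_le B C x.2 hr
  rw [← Real.rpow_div_two_eq_sqrt _ (by positivity), mul_div_cancel_left₀ r two_ne_zero]
  linarith [mul_le_mul_of_nonneg_left hinf (by positivity : (0 : ℝ) ≤ 2 ^ r)]
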